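/- For all real numbers x ≤ 0 and y ≥ 0 one has 2·g(x,y)·[Φ(x) − Φ(x−y)] ≤ f(x,y) ≤ 2·g(x,0)·[Φ(x) − Φ(x−y)]. -/

import Mathlib

open Real Filter MeasureTheory

/-- Standard normal density. -/
noncomputable def stdPhi (u : ℝ) : ℝ := (Real.sqrt (2 * Real.pi))⁻¹ * Real.exp (-u ^ 2 / 2)

/-- Standard normal distribution function. -/
noncomputable def stdCdf (u : ℝ) : ℝ := ∫ s in Set.Iic u, stdPhi s

/-- Standard normal survivor function. -/
noncomputable def stdSurv (u : ℝ) : ℝ := 1 - stdCdf u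

noncomputable def fFun (x y : ℝ) : ℝ := stdSurv (x - y) - Real.exp (2 * x * y) * stdSurv (x + y)

noncomputable def gFun (x y : ℝ) : ℝ := 1 - x * stdSurv (x + y) / stdPhi (x + y)

/-!
Fix `x ≤ 0`. Both `t ↦ f(x,t)` and `t ↦ Φ(x) - Φ(x-t)` vanish at `t = 0`, and their derivatives
are `2 g(x,t) φ(x-t)` and `φ(x-t)`. Since the Mills ratio `Φ̄/φ` is decreasing (Mills'
inequality `u Φ̄(u) ≤ φ(u)`), `t ↦ g(x,t)` is decreasing, so on `[0,y]` the first derivative lies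
between `2 g(x,y)` and `2 g(x,0)` times the second; integrating from `0` to `y` gives both bounds.
-/

lemma sub_le_sub_of_hasDerivAt_le {f g f' g' : ℝ → ℝ} {a b : ℝ} (hab : a ≤ b)
    (hf : ∀ t, HasDerivAt f (f' t) t) (hg : ∀ t, HasDerivAt g (g' t) t)
    (hle : ∀ t ∈ Set.Ioo a b, f' t ≤ g' t) : f b - f a ≤ g b - g a := by
  have hderiv : ∀ t, HasDerivAt (g - f) (g' t - f' t) t := fun t => (hg t).sub (hf t)
  have hmono : MonotoneOn (g - f) (Set.Icc a b) := by
    refine monotoneOn_of_deriv_nonneg (convex_Icc a b)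
      (fun t _ => (hderiv t).continuousAt.continuousWithinAt)
      (fun t _ => (hderiv t).differentiableAt.differentiableWithinAt) fun t ht => ?_
    rw [interior_Icc] at ht
    rw [(hderiv t).deriv, sub_nonneg]
    exact hle t ht
  have := hmono (Set.left_mem_Icc.2 hab) (Set.right_mem_Icc.2 hab) hab
  simp only [Pi.sub_apply] at this
  linarith

lemma hasDerivAt_integral_Iic {f : ℝ → ℝ} (hf : Continuous f) (hint : Integrable f) (u : ℝ) :
    HasDerivAt (fun v => ∫ s in Set.Iic v, f s) (f u) u := by
  have hsplit : (fun v => ∫ s in Set.Iic v, f s) =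
      fun v => (∫ s in Set.Iic 0, f s) + ∫ s in (0)..v, f s := by
    ext v
    rw [← intervalIntegral.integral_Iic_sub_Iic hint.integrableOn hint.integrableOn]
    ring
  rw [hsplit]
  exact (intervalIntegral.integral_hasDerivAt_right hint.intervalIntegrable
    (hf.stronglyMeasurableAtFilter _ _) hf.continuousAt).const_add _

section Gaussian

open ProbabilityTheory

lemma stdPhi_eq_gaussianPDFReal : stdPhi = gaussianPDFReal 0 1 := by
  ext u
  simp [stdPhi, gaussianPDFReal]

lemma stdPhi_pos (u : ℝ) : 0 < stdPhi u := by
  rw [stdPhi_eq_gaussianPDFReal]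
  exact gaussianPDFReal_pos _ _ _ one_ne_zero

lemma continuous_stdPhi : Continuous stdPhi := by
  unfold stdPhi
  fun_prop

lemma integrable_stdPhi : Integrable stdPhi := by
  rw [stdPhi_eq_gaussianPDFReal]
  exact integrable_gaussianPDFReal _ _

lemma stdSurv_eq_integral_Ioi (u : ℝ) : stdSurv u = ∫ s in Set.Ioi u, stdPhi s := by
  have htotal : ∫ s, stdPhi s = 1 := by
    rw [stdPhi_eq_gaussianPDFReal]
    exact integral_gaussianPDFReal_eq_one _ one_ne_zero
  rw [stdSurv, stdCdf, ← htotal, ← intervalIntegral.integral_Iic_add_Ioi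
    integrable_stdPhi.integrableOn integrable_stdPhi.integrableOn]
  ring

lemma hasDerivAt_stdPhi (u : ℝ) : HasDerivAt stdPhi (-u * stdPhi u) u := by
  have hexp : HasDerivAt (fun v : ℝ => -v ^ 2 / 2) (-u) u :=
    ((hasDerivAt_pow 2 u).neg.div_const 2).congr_deriv (by ring)
  exact (hexp.exp.const_mul _).congr_deriv (by unfold stdPhi; ring)

lemma hasDerivAt_stdCdf (u : ℝ) : HasDerivAt stdCdf (stdPhi u) u :=
  hasDerivAt_integral_Iic continuous_stdPhi integrable_stdPhi u

lemma hasDerivAt_stdSurv (u : ℝ) : HasDerivAt stdSurv (-stdPhi u) u :=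
  (hasDerivAt_stdCdf u).const_sub 1

lemma tendsto_stdPhi_atTop : Tendsto stdPhi atTop (nhds 0) := by
  have hexp : Tendsto (fun u : ℝ => -u ^ 2 / 2) atTop atBot :=
    (tendsto_neg_atBot_iff.2 (tendsto_pow_atTop two_ne_zero)).atBot_div_const two_pos
  have h := (tendsto_exp_atBot.comp hexp).const_mul (Real.sqrt (2 * Real.pi))⁻¹
  rw [mul_zero] at h
  exact h

lemma integrable_mul_stdPhi : Integrable fun s => s * stdPhi s := by
  refine ((integrable_mul_exp_neg_mul_sq (b := 1 / 2) one_half_pos).const_mul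
    (Real.sqrt (2 * Real.pi))⁻¹).congr (Eventually.of_forall fun s => ?_)
  simp only [stdPhi]
  ring_nf

lemma integral_Ioi_mul_stdPhi (u : ℝ) : ∫ s in Set.Ioi u, s * stdPhi s = stdPhi u := by
  have hderiv : ∀ s, HasDerivAt (fun v => -stdPhi v) (s * stdPhi s) s :=
    fun s => (hasDerivAt_stdPhi s).neg.congr_deriv (by ring)
  simpa using integral_Ioi_of_hasDerivAt_of_tendsto' (fun s _ => hderiv s)
    integrable_mul_stdPhi.integrableOn tendsto_stdPhi_atTop.neg

lemma mul_stdSurv_le_stdPhi (u : ℝ) : u * stdSurv u ≤ stdPhi u := by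
  calc u * stdSurv u = ∫ s in Set.Ioi u, u * stdPhi s := by
        rw [stdSurv_eq_integral_Ioi, integral_const_mul]
    _ ≤ ∫ s in Set.Ioi u, s * stdPhi s := by
        refine setIntegral_mono_on (integrable_stdPhi.const_mul u).integrableOn
          integrable_mul_stdPhi.integrableOn measurableSet_Ioi fun s hs => ?_
        exact mul_le_mul_of_nonneg_right hs.out.le (stdPhi_pos s).le
    _ = stdPhi u := integral_Ioi_mul_stdPhi u

noncomputable def millsRatio (u : ℝ) : ℝ := stdSurv u / stdPhi u

lemma hasDerivAt_millsRatio (u : ℝ) :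
    HasDerivAt millsRatio (u * stdSurv u / stdPhi u - 1) u := by
  have hφ : stdPhi u ≠ 0 := (stdPhi_pos u).ne'
  refine ((hasDerivAt_stdSurv u).div (hasDerivAt_stdPhi u) hφ).congr_deriv ?_
  field_simp
  ring

lemma antitone_millsRatio : Antitone millsRatio := by
  refine antitone_of_deriv_nonpos (fun u => (hasDerivAt_millsRatio u).differentiableAt) fun u => ?_
  rw [(hasDerivAt_millsRatio u).deriv, sub_nonpos, div_le_one (stdPhi_pos u)]
  exact mul_stdSurv_le_stdPhi u

end Gaussian

lemma exp_mul_stdPhi_add (x y : ℝ) : Real.exp (2 * x * y) * stdPhi (x + y) = stdPhi (x - y) := by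
  unfold stdPhi
  rw [mul_left_comm, ← Real.exp_add]
  ring_nf

lemma gFun_eq_one_sub_mul_millsRatio (x y : ℝ) : gFun x y = 1 - x * millsRatio (x + y) := by
  rw [gFun, millsRatio, mul_div_assoc]

lemma antitone_gFun {x : ℝ} (hx : x ≤ 0) : Antitone (gFun x) := fun s t hst => by
  simp only [gFun_eq_one_sub_mul_millsRatio]
  have := mul_le_mul_of_nonpos_left (antitone_millsRatio (by linarith : x + s ≤ x + t)) hx
  linarith

lemma hasDerivAt_fFun (x t : ℝ) : HasDerivAt (fFun x) (2 * gFun x t * stdPhi (x - t)) t := by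
  have hsub : HasDerivAt (fun t => stdSurv (x - t)) (stdPhi (x - t)) t := by
    simpa using (hasDerivAt_stdSurv (x - t)).comp_const_sub x t
  have hadd : HasDerivAt (fun t => stdSurv (x + t)) (-stdPhi (x + t)) t :=
    (hasDerivAt_stdSurv (x + t)).comp_const_add x t
  have hexp : HasDerivAt (fun t => Real.exp (2 * x * t)) (Real.exp (2 * x * t) * (2 * x)) t := by
    simpa using ((hasDerivAt_id t).const_mul (2 * x)).exp
  refine (hsub.sub (hexp.mul hadd)).congr_deriv ?_
  have hφ : stdPhi (x + t) ≠ 0 := (stdPhi_pos _).ne'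
  rw [gFun, ← exp_mul_stdPhi_add]
  field_simp
  ring

lemma hasDerivAt_stdCdf_sub_stdCdf_sub (x t : ℝ) :
    HasDerivAt (fun t => stdCdf x - stdCdf (x - t)) (stdPhi (x - t)) t := by
  simpa using ((hasDerivAt_stdCdf (x - t)).comp_const_sub x t).const_sub _

/-- Two-sided estimate for f in the case x ≤ 0. -/
theorem fFun_bounds_of_nonpos (x y : ℝ) (hx : x ≤ 0) (hy : 0 ≤ y) :
    2 * gFun x y * (stdCdf x - stdCdf (x - y)) ≤ fFun x y ∧
      fFun x y ≤ 2 * gFun x 0 * (stdCdf x - stdCdf (x - y)) := by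
  have hF0 : fFun x 0 = 0 := by simp [fFun]
  have hG : ∀ c t, HasDerivAt (fun t => 2 * c * (stdCdf x - stdCdf (x - t)))
      (2 * c * stdPhi (x - t)) t :=
    fun c t => (hasDerivAt_stdCdf_sub_stdCdf_sub x t).const_mul (2 * c)
  have hderiv_le : ∀ {s t r}, s ≤ t →
      2 * gFun x t * stdPhi (x - r) ≤ 2 * gFun x s * stdPhi (x - r) :=
    fun hst => mul_le_mul_of_nonneg_right (by linarith [antitone_gFun hx hst]) (stdPhi_pos _).le
  constructor
  · have := sub_le_sub_of_hasDerivAt_le hy (hG (gFun x y)) (hasDerivAt_fFun x)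
      fun t ht => hderiv_le ht.2.le
    simpa [hF0] using this
  · have := sub_le_sub_of_hasDerivAt_le hy (hasDerivAt_fFun x) (hG (gFun x 0))
      fun t ht => hderiv_le ht.1.le
    simpa [hF0] using this
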